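/- arXiv:2503.00014 — 2 statements merged into one kernel-verified Lean document; each statement's English description precedes it below -/
import Mathlib

section
/- Fix b > 0 and let S(b) = {z ∈ ℂ : Re(z) > 0, |Im(z)| ≤ Re(z), |z| ≤ b}. Then the map ρ₁(h₁,h₂) = h₂/(1+h₁h₂) is Lipschitz on S(b)×S(b) with respect to the ℓ¹ norm, with Lipschitz constant K₀ = max{1, b²}: for all (h₁,h₂), (g₁,g₂) ∈ S(b)², |ρ₁(h₁,h₂) - ρ₁(g₁,g₂)| ≤ K₀(|h₁-g₁| + |h₂-g₂|). -/
open Complex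

/-
Points of the closed sector |Im z| ≤ Re z have pairwise products with nonnegative real part, so
|1 + h₁h₂| ≥ 1 on the sector. Then

  h₂/(1+h₁h₂) - g₂/(1+g₁g₂) = ((h₂ - g₂) + h₂g₂(g₁ - h₁)) / ((1+h₁h₂)(1+g₁g₂)),

whose denominator has norm at least 1 and whose numerator has norm at most |h₂ - g₂| + b²|h₁ - g₁|.
-/

lemma Complex.re_mul_nonneg_of_abs_im_le_re {z w : ℂ} (hz : |z.im| ≤ z.re) (hw : |w.im| ≤ w.re) :
    0 ≤ (z * w).re := by
  have him : z.im * w.im ≤ z.re * w.re :=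
    calc z.im * w.im ≤ |z.im| * |w.im| := by rw [← abs_mul]; exact le_abs_self _
      _ ≤ z.re * w.re := mul_le_mul hz hw (abs_nonneg _) ((abs_nonneg _).trans hz)
  rw [mul_re]
  linarith

lemma Complex.one_le_norm_one_add_of_re_nonneg {z : ℂ} (hz : 0 ≤ z.re) : 1 ≤ ‖1 + z‖ :=
  calc (1 : ℝ) ≤ (1 + z).re := by simp only [add_re, one_re]; linarith
    _ ≤ ‖1 + z‖ := re_le_norm _

lemma div_one_add_mul_sub_div_one_add_mul {K : Type*} [Field K] {h₁ h₂ g₁ g₂ : K}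
    (hh : 1 + h₁ * h₂ ≠ 0) (hg : 1 + g₁ * g₂ ≠ 0) :
    h₂ / (1 + h₁ * h₂) - g₂ / (1 + g₁ * g₂)
      = ((h₂ - g₂) + h₂ * g₂ * (g₁ - h₁)) / ((1 + h₁ * h₂) * (1 + g₁ * g₂)) := by
  rw [div_sub_div _ _ hh hg]
  ring

lemma norm_div_one_add_mul_sub_div_one_add_mul_le {h₁ h₂ g₁ g₂ : ℂ} {b : ℝ}
    (hh : 1 ≤ ‖1 + h₁ * h₂‖) (hg : 1 ≤ ‖1 + g₁ * g₂‖) (hh₂ : ‖h₂‖ ≤ b) (hg₂ : ‖g₂‖ ≤ b) :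
    ‖h₂ / (1 + h₁ * h₂) - g₂ / (1 + g₁ * g₂)‖ ≤ ‖h₂ - g₂‖ + b ^ 2 * ‖h₁ - g₁‖ := by
  have hh0 : 1 + h₁ * h₂ ≠ 0 := norm_pos_iff.mp (one_pos.trans_le hh)
  have hg0 : 1 + g₁ * g₂ ≠ 0 := norm_pos_iff.mp (one_pos.trans_le hg)
  have hden : 1 ≤ ‖(1 + h₁ * h₂) * (1 + g₁ * g₂)‖ := by
    rw [norm_mul]; exact one_le_mul_of_one_le_of_one_le hh hg
  have hprod : ‖h₂ * g₂‖ ≤ b ^ 2 := by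
    rw [norm_mul, sq]; exact mul_le_mul hh₂ hg₂ (norm_nonneg _) ((norm_nonneg _).trans hh₂)
  rw [div_one_add_mul_sub_div_one_add_mul hh0 hg0, norm_div]
  calc ‖(h₂ - g₂) + h₂ * g₂ * (g₁ - h₁)‖ / ‖(1 + h₁ * h₂) * (1 + g₁ * g₂)‖
      ≤ ‖(h₂ - g₂) + h₂ * g₂ * (g₁ - h₁)‖ := div_le_self (norm_nonneg _) hden
    _ ≤ ‖h₂ - g₂‖ + ‖h₂ * g₂‖ * ‖g₁ - h₁‖ := by rw [← norm_mul]; exact norm_add_le _ _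
    _ ≤ ‖h₂ - g₂‖ + b ^ 2 * ‖h₁ - g₁‖ := by
      rw [norm_sub_rev g₁]; gcongr

theorem stmt_11_general (b : ℝ)
    (S : Set ℂ) (hS : S = {z : ℂ | 0 < z.re ∧ |z.im| ≤ z.re ∧ ‖z‖ ≤ b})
    (h₁ h₂ g₁ g₂ : ℂ) (hh₁ : h₁ ∈ S) (hh₂ : h₂ ∈ S) (hg₁ : g₁ ∈ S) (hg₂ : g₂ ∈ S) :
    ‖h₂ / (1 + h₁ * h₂) - g₂ / (1 + g₁ * g₂)‖
      ≤ max 1 (b ^ 2) * (‖h₁ - g₁‖ + ‖h₂ - g₂‖) := by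
  subst hS
  obtain ⟨-, hh₁, -⟩ := hh₁
  obtain ⟨-, hh₂, hh₂b⟩ := hh₂
  obtain ⟨-, hg₁, -⟩ := hg₁
  obtain ⟨-, hg₂, hg₂b⟩ := hg₂
  calc ‖h₂ / (1 + h₁ * h₂) - g₂ / (1 + g₁ * g₂)‖
      ≤ ‖h₂ - g₂‖ + b ^ 2 * ‖h₁ - g₁‖ :=
        norm_div_one_add_mul_sub_div_one_add_mul_le
          (one_le_norm_one_add_of_re_nonneg (re_mul_nonneg_of_abs_im_le_re hh₁ hh₂))
          (one_le_norm_one_add_of_re_nonneg (re_mul_nonneg_of_abs_im_le_re hg₁ hg₂)) hh₂b hg₂b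
    _ ≤ max 1 (b ^ 2) * ‖h₂ - g₂‖ + max 1 (b ^ 2) * ‖h₁ - g₁‖ := by
        gcongr
        · exact le_mul_of_one_le_left (norm_nonneg _) (le_max_left _ _)
        · exact le_max_right _ _
    _ = max 1 (b ^ 2) * (‖h₁ - g₁‖ + ‖h₂ - g₂‖) := by ring

theorem stmt_11 (b : ℝ) (hb : 0 < b)
    (S : Set ℂ) (hS : S = {z : ℂ | 0 < z.re ∧ |z.im| ≤ z.re ∧ ‖z‖ ≤ b})
    (h₁ h₂ g₁ g₂ : ℂ) (hh₁ : h₁ ∈ S) (hh₂ : h₂ ∈ S) (hg₁ : g₁ ∈ S) (hg₂ : g₂ ∈ S) :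
    ‖h₂ / (1 + h₁ * h₂) - g₂ / (1 + g₁ * g₂)‖
      ≤ max 1 (b ^ 2) * (‖h₁ - g₁‖ + ‖h₂ - g₂‖) :=
  stmt_11_general b S hS h₁ h₂ g₁ g₂ hh₁ hh₂ hg₁ hg₂
end

section
/- Let c > 0 and define d₀ = 1/(27c⁶), d₂ = (2c² + 10c − 1)/(27c⁶), d₄ = (c−2)³/(27c⁵). Then the discriminant d₂² − 4d₀d₄ equals ((4c+1)/(9c⁴))³, which is strictly positive; moreover the root R₋ = (d₂ − √(d₂² − 4d₀d₄))/(2d₀) is positive if and only if c > 2. -/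
theorem stmt_14 (c : ℝ) (hc : 0 < c)
    (d₀ d₂ d₄ : ℝ)
    (hd₀ : d₀ = 1 / (27 * c ^ 6))
    (hd₂ : d₂ = (2 * c ^ 2 + 10 * c - 1) / (27 * c ^ 6))
    (hd₄ : d₄ = (c - 2) ^ 3 / (27 * c ^ 5)) :
    d₂ ^ 2 - 4 * d₀ * d₄ = ((4 * c + 1) / (9 * c ^ 4)) ^ 3 ∧
    0 < d₂ ^ 2 - 4 * d₀ * d₄ ∧
    (0 < (d₂ - Real.sqrt (d₂ ^ 2 - 4 * d₀ * d₄)) / (2 * d₀) ↔ 2 < c) := by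
  have hc6 : (0:ℝ) < 27 * c ^ 6 := by positivity
  have hdisc : d₂ ^ 2 - 4 * d₀ * d₄ = ((4 * c + 1) / (9 * c ^ 4)) ^ 3 := by
    subst hd₀ hd₂ hd₄; field_simp; ring
  have hpos : 0 < d₂ ^ 2 - 4 * d₀ * d₄ := by
    rw [hdisc]; positivity
  have hd₀pos : 0 < d₀ := by rw [hd₀]; positivity
  refine ⟨hdisc, hpos, ?_⟩
  rw [div_pos_iff]
  constructor
  · rintro (⟨h1, _⟩ | ⟨_, h2⟩)
    · have hsub : Real.sqrt (d₂ ^ 2 - 4 * d₀ * d₄) < d₂ := by linarith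
      have hd2pos : 0 < d₂ := lt_of_le_of_lt (Real.sqrt_nonneg _) hsub
      have := (Real.sqrt_lt' hd2pos).mp hsub
      have hd4 : 0 < d₄ := by nlinarith
      rw [hd₄] at hd4
      have h5 : (0:ℝ) < 27 * c ^ 5 := by positivity
      have hcube : 0 < (c - 2) ^ 3 := by
        have := (div_pos_iff.mp hd4)
        rcases this with ⟨h, _⟩ | ⟨_, h⟩
        · exact h
        · linarith
      nlinarith [sq_nonneg (c - 2)]
    · linarith
  · intro h2c
    left
    have hd2pos : 0 < d₂ := by
      rw [hd₂]; apply div_pos; nlinarith; exact hc6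
    have hd4 : 0 < d₄ := by
      rw [hd₄]; exact div_pos (pow_pos (by linarith) 3) (by positivity)
    have : Real.sqrt (d₂ ^ 2 - 4 * d₀ * d₄) < d₂ := by
      rw [Real.sqrt_lt' hd2pos]; nlinarith
    exact ⟨by linarith, by linarith⟩
end
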